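/- arXiv:math-ph/0302049 — 4 statements merged into one kernel-verified Lean document; each statement's English description precedes it below -/
import Mathlib

section
/- Let L̃ ⊂ ℝ^d × ℝ^m be a lattice with π₁|_{L̃} injective and π₂(L̃) dense in ℝ^m. If W ⊂ ℝ^m has nonempty interior, then the model set Λ(W) = {x ∈ π₁(L̃) : x* ∈ W} is relatively dense in ℝ^d. -/
open MeasureTheory Metric

/-- a model set whose window has nonempty interior is relatively dense. -/
theorem model_set_relatively_dense (d m : ℕ)
    (L : Submodule ℤ (EuclideanSpace ℝ (Fin d) × EuclideanSpace ℝ (Fin m)))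
    [DiscreteTopology L] [IsZLattice ℝ L]
    (hinj1 : Set.InjOn Prod.fst (L : Set (EuclideanSpace ℝ (Fin d) × EuclideanSpace ℝ (Fin m))))
    (hdense2 : Dense (Prod.snd '' (L : Set (EuclideanSpace ℝ (Fin d) × EuclideanSpace ℝ (Fin m)))))
    (star : EuclideanSpace ℝ (Fin d) → EuclideanSpace ℝ (Fin m))
    (hstar : ∀ p ∈ L, star (Prod.fst p) = Prod.snd p)
    (W : Set (EuclideanSpace ℝ (Fin m))) (hW : (interior W).Nonempty) :
    ∃ R : ℝ, 0 < R ∧ ∀ a : EuclideanSpace ℝ (Fin d),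
      ∃ x ∈ {x ∈ Prod.fst '' (L : Set (EuclideanSpace ℝ (Fin d) × EuclideanSpace ℝ (Fin m))) | star x ∈ W},
        dist x a ≤ R := by
  classical
  obtain ⟨w0, hw0⟩ := hW
  obtain ⟨ε, hε, hball⟩ := Metric.isOpen_iff.mp isOpen_interior w0 hw0
  set E := EuclideanSpace ℝ (Fin d) × EuclideanSpace ℝ (Fin m)
  let b := Module.Free.chooseBasis ℤ L
  let b' := Module.Basis.ofZLatticeBasis ℝ L b
  obtain ⟨C, hC⟩ := isBounded_iff_forall_norm_le.mp
    (ZSpan.fundamentalDomain_isBounded b')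
  have hcover : ∀ v : E, ∃ p ∈ L, dist v p ≤ C := by
    intro v
    obtain ⟨u, hu, -⟩ := ZSpan.exist_unique_vadd_mem_fundamentalDomain b' v
    have hle : Submodule.span ℤ (Set.range ⇑b') ≤ L := le_of_eq (b.ofZLatticeBasis_span ℝ)
    refine ⟨-(u : E), neg_mem (hle u.2), ?_⟩
    have := hC _ hu
    rw [Submodule.vadd_def, vadd_eq_add] at this
    rw [dist_eq_norm, sub_neg_eq_add, add_comm]
    exact this
  -- finite subcover of the closed ball of radius C in the internal space
  have hsub : closedBall (0 : EuclideanSpace ℝ (Fin m)) C ⊆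
      ⋃ q ∈ (L : Set E), ball q.2 (ε / 2) := by
    intro y _
    obtain ⟨z, hz1, hz2⟩ := Metric.dense_iff.mp hdense2 y (ε / 2) (by positivity)
    obtain ⟨q, hq, rfl⟩ := hz2
    exact Set.mem_biUnion hq (by simpa [dist_comm] using hz1)
  obtain ⟨t, htL, htfin, htcov⟩ := (isCompact_closedBall (0 : EuclideanSpace ℝ (Fin m)) C)
    |>.elim_finite_subcover_image (fun q _ => isOpen_ball) hsub
  obtain ⟨M, hM⟩ := htfin.isBounded.subset_closedBall 0
  refine ⟨max 1 (C + M), lt_of_lt_of_le one_pos (le_max_left _ _), fun a => ?_⟩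
  obtain ⟨p0, hp0L, hp0⟩ := hcover (a, w0)
  have hC0 : 0 ≤ C := le_trans dist_nonneg hp0
  have hy : w0 - p0.2 ∈ closedBall (0 : EuclideanSpace ℝ (Fin m)) C := by
    rw [mem_closedBall, dist_zero_right]
    calc ‖w0 - p0.2‖ = dist w0 p0.2 := (dist_eq_norm w0 p0.2).symm
      _ ≤ dist (a, w0) p0 := by rw [Prod.dist_eq]; exact le_max_right _ _
      _ ≤ C := hp0
  obtain ⟨q, hqt, hq⟩ := Set.mem_iUnion₂.mp (htcov hy)
  have hqL : q ∈ L := htL hqt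
  have hqM : ‖q.1‖ ≤ M := by
    have : ‖q‖ ≤ M := by simpa [dist_zero_right] using hM hqt
    exact le_trans (norm_fst_le q) this
  set p : E := p0 + q with hp
  have hpL : p ∈ L := add_mem hp0L hqL
  refine ⟨p.1, ⟨⟨p, hpL, rfl⟩, ?_⟩, ?_⟩
  · -- star p.1 ∈ W
    rw [hstar p hpL]
    apply interior_subset
    apply hball
    rw [mem_ball]
    have : dist p.2 w0 = dist q.2 (w0 - p0.2) := by
      rw [dist_eq_norm, dist_eq_norm, hp]
      congr 1
      rw [Prod.snd_add]
      abel
    rw [this]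
    exact lt_of_lt_of_le (mem_ball'.mp hq) (by linarith)
  · -- dist p.1 a ≤ R
    have h1 : dist p0.1 a ≤ C := by
      calc dist p0.1 a = dist a p0.1 := dist_comm _ _
        _ ≤ dist (a, w0) p0 := by rw [Prod.dist_eq]; exact le_max_left _ _
        _ ≤ C := hp0
    calc dist p.1 a = ‖p0.1 + q.1 - a‖ := by rw [dist_eq_norm, hp]; rfl
      _ ≤ ‖p0.1 - a‖ + ‖q.1‖ := by
          have : p0.1 + q.1 - a = (p0.1 - a) + q.1 := by abel
          rw [this]; exact norm_add_le _ _
      _ ≤ C + M := add_le_add (by rwa [← dist_eq_norm]) hqM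
      _ ≤ max 1 (C + M) := le_max_right _ _
end

section
/- Translation boundedness of the dense Dirac comb: assume a cut-and-project scheme where both π₁|_{L̃} and π₂|_{L̃} are injective and both images are dense. Let f : ℝ^m → ℂ be bounded with |x|^{m+1+α}|f(x)| ≤ C for constants C, α > 0. Then ω = ∑_{x ∈ L} f(x*) δ_x defines a translation-bounded complex Borel measure on ℝ^d: for every compact K ⊂ ℝ^d, sup_{y ∈ ℝ^d} |ω|(y + K) < ∞. -/
open MeasureTheory Metric

/-- The projection of the lattice to direct space. -/
def physL (d m : ℕ) (L : Submodule ℤ (EuclideanSpace ℝ (Fin d) × EuclideanSpace ℝ (Fin m))) :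
    Set (EuclideanSpace ℝ (Fin d)) :=
  Prod.fst '' (L : Set (EuclideanSpace ℝ (Fin d) × EuclideanSpace ℝ (Fin m)))

/-! A discrete subgroup of `ℝ^d × ℝ^m` is uniformly separated, so the balls of a small radius `r`
around its points are disjoint. Decay of order `s > m` yields an integrable majorant `H` on `ℝ^m`
with `‖f p.2‖ ≤ H q.2` whenever `dist q p ≤ r`. Averaging over the balls around the lattice points
over `y + K` (all inside the slab `B(y, R + r) × ℝ^m`) bounds the weighted sum by
`vol B(0, R + r) * ∫ H / vol B(0, r)`, which does not depend on `y`. -/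

theorem exists_pos_pairwise_le_dist_of_discreteTopology {E S : Type*} [SeminormedAddCommGroup E]
    [SetLike S E] [AddSubgroupClass S E] (L : S) [DiscreteTopology L] :
    ∃ ε > 0, (L : Set E).Pairwise fun p q => ε ≤ dist p q := by
  obtain ⟨ε, hε, hball⟩ := Metric.mem_nhds_iff.1 ((isOpen_discrete {(0 : L)}).mem_nhds rfl)
  refine ⟨ε, hε, fun p hp q hq hpq => ?_⟩
  by_contra! h
  have hpq0 : (⟨p - q, sub_mem hp hq⟩ : L) = 0 :=
    hball (by simpa [mem_ball, Subtype.dist_eq, dist_eq_norm] using h)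
  exact hpq (sub_eq_zero.1 (congrArg Subtype.val hpq0))

theorem norm_le_mul_one_add_norm_rpow_neg_of_dist_le_one {F G : Type*} [SeminormedAddCommGroup F]
    [SeminormedAddCommGroup G] {f : F → G} {s M C : ℝ} (hs : 0 ≤ s) (hM : ∀ x, ‖f x‖ ≤ M)
    (hC : ∀ x, ‖x‖ ^ s * ‖f x‖ ≤ C) {x z : F} (hzx : dist z x ≤ 1) :
    ‖f x‖ ≤ 3 ^ s * max M C * (1 + ‖z‖) ^ (-s) := by
  have hz : 1 + ‖z‖ ≤ 3 * max 1 ‖x‖ := by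
    linarith [norm_le_norm_add_const_of_dist_le hzx, le_max_left 1 ‖x‖, le_max_right 1 ‖x‖]
  have hfx : ‖f x‖ * max 1 ‖x‖ ^ s ≤ max M C := by
    rw [Real.rpow_max zero_le_one (norm_nonneg x) hs, Real.one_rpow,
      mul_max_of_nonneg _ _ (norm_nonneg _), mul_one, mul_comm]
    exact max_le_max (hM x) (hC x)
  have hz0 : 0 < 1 + ‖z‖ := by positivity
  rw [Real.rpow_neg hz0.le, ← div_eq_mul_inv, le_div_iff₀ (by positivity)]
  calc ‖f x‖ * (1 + ‖z‖) ^ s ≤ ‖f x‖ * (3 * max 1 ‖x‖) ^ s := by gcongr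
    _ = 3 ^ s * (‖f x‖ * max 1 ‖x‖ ^ s) := by
      rw [Real.mul_rpow (by norm_num) (by positivity)]; ring
    _ ≤ 3 ^ s * max M C := by gcongr

theorem exists_integrable_majorant_of_rpow_decay {F G : Type*} [NormedAddCommGroup F]
    [NormedSpace ℝ F] [FiniteDimensional ℝ F] [MeasurableSpace F] [BorelSpace F]
    (μ : Measure F) [μ.IsAddHaarMeasure] [SeminormedAddCommGroup G] {f : F → G} {s M C : ℝ}
    (hs : (Module.finrank ℝ F : ℝ) < s) (hM : ∀ x, ‖f x‖ ≤ M)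
    (hC : ∀ x, ‖x‖ ^ s * ‖f x‖ ≤ C) :
    ∃ H : F → ℝ, 0 ≤ H ∧ Integrable H μ ∧ ∀ x z, dist z x ≤ 1 → ‖f x‖ ≤ H z := by
  have hM0 : 0 ≤ M := (norm_nonneg _).trans (hM 0)
  refine ⟨fun z => 3 ^ s * max M C * (1 + ‖z‖) ^ (-s), fun z => by positivity,
    (integrable_one_add_norm hs).const_mul _, fun x z hzx => ?_⟩
  exact norm_le_mul_one_add_norm_rpow_neg_of_dist_le_one ((Nat.cast_nonneg _).trans hs.le)
    hM hC hzx

theorem sum_mul_measureReal_closedBall_le_setIntegral {X : Type*} [PseudoMetricSpace X]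
    [ProperSpace X] [MeasurableSpace X] [OpensMeasurableSpace X] {μ : Measure X}
    [IsFiniteMeasureOnCompacts μ] {T : Finset X} {r : ℝ}
    (hT : (T : Set X).Pairwise fun p q => r + r < dist p q) {S : Set X}
    (hTS : ∀ p ∈ T, closedBall p r ⊆ S) {a h : X → ℝ} (h0 : 0 ≤ h) (hh : IntegrableOn h S μ)
    (hah : ∀ p ∈ T, ∀ q ∈ closedBall p r, a p ≤ h q) :
    ∑ p ∈ T, a p * μ.real (closedBall p r) ≤ ∫ q in S, h q ∂μ :=
  calc ∑ p ∈ T, a p * μ.real (closedBall p r) = ∑ p ∈ T, ∫ _ in closedBall p r, a p ∂μ := by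
        simp [mul_comm]
    _ ≤ ∑ p ∈ T, ∫ q in closedBall p r, h q ∂μ := Finset.sum_le_sum fun p hp =>
        setIntegral_mono_on (integrableOn_const measure_closedBall_lt_top.ne)
          (hh.mono_set (hTS p hp)) measurableSet_closedBall (hah p hp)
    _ = ∫ q in ⋃ p ∈ T, closedBall p r, h q ∂μ :=
        (integral_biUnion_finset T (fun _ _ => measurableSet_closedBall)
          (hT.mono' fun _ _ => closedBall_disjoint_closedBall)
          fun p hp => hh.mono_set (hTS p hp)).symm
    _ ≤ ∫ q in S, h q ∂μ := setIntegral_mono_set hh (.of_forall fun q => h0 q)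
        (Set.iUnion₂_subset hTS).eventuallyLE

theorem integrableOn_prod_univ_comp_snd {E F : Type*} [MeasurableSpace E] [MeasurableSpace F]
    {μ : Measure E} {ν : Measure F} [SFinite μ] [SFinite ν] {A : Set E} (hA : μ A ≠ ⊤)
    {H : F → ℝ} (hH : Integrable H ν) :
    IntegrableOn (fun q => H q.2) (A ×ˢ Set.univ) (μ.prod ν) := by
  have : IsFiniteMeasure (μ.restrict A) := isFiniteMeasure_restrict.2 hA
  rw [IntegrableOn, ← Measure.prod_restrict, Measure.restrict_univ]
  exact hH.comp_snd _

theorem setIntegral_prod_univ_comp_snd {E F : Type*} [MeasurableSpace E] [MeasurableSpace F]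
    (μ : Measure E) (ν : Measure F) [SFinite μ] [SFinite ν] (A : Set E) (H : F → ℝ) :
    ∫ q in A ×ˢ Set.univ, H q.2 ∂μ.prod ν = μ.real A * ∫ z, H z ∂ν := by
  rw [← Measure.prod_restrict, Measure.restrict_univ, integral_fun_snd, smul_eq_mul,
    measureReal_restrict_apply_univ]

section Product

variable {E F : Type*} [NormedAddCommGroup E] [NormedSpace ℝ E] [FiniteDimensional ℝ E]
  [MeasurableSpace E] [BorelSpace E] [NormedAddCommGroup F] [NormedSpace ℝ F]
  [FiniteDimensional ℝ F] [MeasurableSpace F] [BorelSpace F]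

theorem sum_le_of_pairwise_dist_of_fst_mem_closedBall (μ : Measure E) [μ.IsAddHaarMeasure]
    (ν : Measure F) [ν.IsAddHaarMeasure] {T : Finset (E × F)} {r ρ : ℝ} {y : E} (hr : 0 < r)
    (hT : (T : Set (E × F)).Pairwise fun p q => r + r < dist p q)
    (hTy : ∀ p ∈ T, p.1 ∈ closedBall y ρ) {a H : F → ℝ} (hH0 : 0 ≤ H) (hH : Integrable H ν)
    (haH : ∀ p ∈ T, ∀ q, dist q p ≤ r → a p.2 ≤ H q.2) :
    ∑ p ∈ T, a p.2 ≤
      μ.real (closedBall 0 (ρ + r)) * (∫ z, H z ∂ν) / (μ.prod ν).real (closedBall 0 r) := by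
  have hTS : ∀ p ∈ T, closedBall p r ⊆ closedBall y (ρ + r) ×ˢ Set.univ := by
    intro p hp q hq
    have hqp : dist q.1 p.1 ≤ r := by
      rw [mem_closedBall, Prod.dist_eq] at hq
      exact (le_max_left _ _).trans hq
    have hpy := mem_closedBall.1 (hTy p hp)
    exact ⟨mem_closedBall.2 ((dist_triangle _ _ _).trans (by linarith)), trivial⟩
  have hsum := sum_mul_measureReal_closedBall_le_setIntegral (μ := μ.prod ν) hT hTS
    (fun q => hH0 q.2) (integrableOn_prod_univ_comp_snd measure_closedBall_lt_top.ne hH)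
    (fun p hp q hq => haH p hp q (mem_closedBall.1 hq))
  simp_rw [Measure.addHaar_real_closedBall_center] at hsum
  rw [← Finset.sum_mul, setIntegral_prod_univ_comp_snd,
    Measure.addHaar_real_closedBall_center μ y] at hsum
  exact (le_div_iff₀ (ENNReal.toReal_pos (measure_closedBall_pos _ _ hr).ne'
    measure_closedBall_lt_top.ne)).2 hsum

theorem exists_forall_sum_le_of_discreteTopology (ν : Measure F) [ν.IsAddHaarMeasure]
    {S : Type*} [SetLike S (E × F)] [AddSubgroupClass S (E × F)] (L : S) [DiscreteTopology L]
    {a H : F → ℝ} (hH0 : 0 ≤ H) (hH : Integrable H ν) (haH : ∀ x z, dist z x ≤ 1 → a x ≤ H z)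
    (R : ℝ) :
    ∃ B, ∀ (y : E) (T : Finset (E × F)), (T : Set (E × F)) ⊆ L →
      (∀ p ∈ T, p.1 ∈ closedBall y R) → ∑ p ∈ T, a p.2 ≤ B := by
  obtain ⟨ε, hε, hsep⟩ := exists_pos_pairwise_le_dist_of_discreteTopology L
  set r := min (ε / 3) 1
  refine ⟨_, fun y T hTL hTy => sum_le_of_pairwise_dist_of_fst_mem_closedBall Measure.addHaar ν
    (r := r) (by positivity) ?_ hTy hH0 hH fun p _ q hqp => ?_⟩
  · exact (hsep.mono hTL).mono' fun p q hpq => by linarith [min_le_left (ε / 3) 1]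
  · rw [Prod.dist_eq] at hqp
    exact haH _ _ ((le_max_right _ _).trans (hqp.trans (min_le_right _ _)))

end Product

theorem dense_dirac_comb_translation_bounded_general (d m : ℕ)
    (L : Submodule ℤ (EuclideanSpace ℝ (Fin d) × EuclideanSpace ℝ (Fin m)))
    [DiscreteTopology L]
    (star : EuclideanSpace ℝ (Fin d) → EuclideanSpace ℝ (Fin m))
    (hstar : ∀ p ∈ L, star (Prod.fst p) = Prod.snd p)
    (f : EuclideanSpace ℝ (Fin m) → ℂ) (M : ℝ) (hM : ∀ x, ‖f x‖ ≤ M)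
    (C α : ℝ) (hα : 0 < α)
    (hdecay : ∀ x : EuclideanSpace ℝ (Fin m), ‖x‖ ^ ((m : ℝ) + 1 + α) * ‖f x‖ ≤ C) :
    ∀ K : Set (EuclideanSpace ℝ (Fin d)), IsCompact K →
    ∃ B : ℝ, ∀ y : EuclideanSpace ℝ (Fin d),
      (Summable fun x : ((physL d m L ∩ {z | z - y ∈ K} : Set (EuclideanSpace ℝ (Fin d)))) =>
        ‖f (star (x : EuclideanSpace ℝ (Fin d)))‖) ∧
      (∑' x : ((physL d m L ∩ {z | z - y ∈ K} : Set (EuclideanSpace ℝ (Fin d)))),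
        ‖f (star (x : EuclideanSpace ℝ (Fin d)))‖) ≤ B := by
  intro K hK
  obtain ⟨R, hKR⟩ := hK.isBounded.subset_closedBall 0
  obtain ⟨H, hH0, hH, hfH⟩ := exists_integrable_majorant_of_rpow_decay volume
    (by rw [finrank_euclideanSpace_fin]; linarith) hM hdecay
  obtain ⟨B, hB⟩ := exists_forall_sum_le_of_discreteTopology volume L hH0 hH hfH R
  refine ⟨B, fun y => ?_⟩
  set A := physL d m L ∩ {z | z - y ∈ K}
  choose g hgL hg using fun x : A => x.2.1
  have hg_inj : Function.Injective g := fun x x' h => Subtype.ext (by rw [← hg x, ← hg x', h])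
  have hbound (T : Finset A) : ∑ x ∈ T, ‖f (star x)‖ ≤ B := by
    have hsum_lift : ∑ x ∈ T, ‖f (star x)‖ = ∑ p ∈ T.map ⟨g, hg_inj⟩, ‖f p.2‖ := by
      simp [← hg, hstar _ (hgL _)]
    rw [hsum_lift]
    refine hB y _ ?_ ?_
    · rw [Finset.coe_map]
      exact Set.image_subset_iff.2 fun x _ => hgL x
    · simp only [Finset.mem_map, Function.Embedding.coeFn_mk, forall_exists_index, and_imp]
      rintro _ x - rfl
      rw [hg, mem_closedBall, dist_eq_norm]
      exact mem_closedBall_zero_iff.1 (hKR x.2.2)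
  exact ⟨summable_of_sum_le (fun _ => norm_nonneg _) hbound,
    Summable.tsum_le_of_sum_le (summable_of_sum_le (fun _ => norm_nonneg _) hbound) hbound⟩

/-- the dense weighted Dirac comb ω = ∑_{x∈L} f(x*) δ_x is a translation
bounded measure: over every translate of a compact set, the total variation
|ω|(y+K) = ∑_{x ∈ L ∩ (y+K)} ‖f(x*)‖ is finite, uniformly in y. -/
theorem dense_dirac_comb_translation_bounded (d m : ℕ)
    (L : Submodule ℤ (EuclideanSpace ℝ (Fin d) × EuclideanSpace ℝ (Fin m)))
    [DiscreteTopology L] [IsZLattice ℝ L]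
    (hinj1 : Set.InjOn Prod.fst (L : Set (EuclideanSpace ℝ (Fin d) × EuclideanSpace ℝ (Fin m))))
    (hdense1 : Dense (physL d m L))
    (hinj2 : Set.InjOn Prod.snd (L : Set (EuclideanSpace ℝ (Fin d) × EuclideanSpace ℝ (Fin m))))
    (hdense2 : Dense (Prod.snd '' (L : Set (EuclideanSpace ℝ (Fin d) × EuclideanSpace ℝ (Fin m)))))
    (star : EuclideanSpace ℝ (Fin d) → EuclideanSpace ℝ (Fin m))
    (hstar : ∀ p ∈ L, star (Prod.fst p) = Prod.snd p)
    (f : EuclideanSpace ℝ (Fin m) → ℂ) (M : ℝ) (hM : ∀ x, ‖f x‖ ≤ M)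
    (C α : ℝ) (hC : 0 < C) (hα : 0 < α)
    (hdecay : ∀ x : EuclideanSpace ℝ (Fin m), ‖x‖ ^ ((m : ℝ) + 1 + α) * ‖f x‖ ≤ C) :
    ∀ K : Set (EuclideanSpace ℝ (Fin d)), IsCompact K →
    ∃ B : ℝ, ∀ y : EuclideanSpace ℝ (Fin d),
      (Summable fun x : ((physL d m L ∩ {z | z - y ∈ K} : Set (EuclideanSpace ℝ (Fin d)))) =>
        ‖f (star (x : EuclideanSpace ℝ (Fin d)))‖) ∧
      (∑' x : ((physL d m L ∩ {z | z - y ∈ K} : Set (EuclideanSpace ℝ (Fin d)))),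
        ‖f (star (x : EuclideanSpace ℝ (Fin d)))‖) ≤ B :=
  dense_dirac_comb_translation_bounded_general d m L star hstar f M hM C α hα hdecay
end

section
/- The measure γ_{|ω|} = ∑_{z ∈ L} |η|(z) δ_z, where |η|(z) = (1/|det(L̃)|) ∫_{ℝ^m} |f(u)|·|f(u − z*)| du, is a well-defined (locally finite) measure on ℝ^d: for every compact K ⊂ ℝ^d, ∑_{z ∈ L ∩ K} |η|(z) < ∞. -/
/-!
The decay `‖f x‖ ≤ D (1 + ‖x‖)^(-s)` with `s = m + 1 + α > m` survives the correlation
`y ↦ ∫ ‖f u‖ ‖f (u - y)‖`: since `1 + ‖y‖ ≤ (1 + ‖u‖) + (1 + ‖u - y‖)`, one of the two factors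
is at least `(1 + ‖y‖) / 2`, so the correlation is `O((1 + ‖y‖)^(-s))`. It remains to sum
`(1 + ‖z⋆‖)^(-s)` over `z ∈ π₁(L) ∩ K`. The points `z⋆` are uniformly separated: a difference of
two lattice points over the bounded window `K` with small internal part lies in a finite subset
of `L`, and `π₂` is injective on `L`. Disjoint balls around uniformly separated points then
compare the sum with the integral of the integrable weight `(1 + ‖x‖)^(-s)`.
-/

open MeasureTheory Metric

open Module Filter Topology

lemma Real.rpow_neg_mul_rpow_neg_le {a b t s : ℝ} (hs : 0 ≤ s) (ha : 0 < a) (hb : 0 < b)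
    (ht : 0 < t) (htab : t ≤ a + b) :
    a ^ (-s) * b ^ (-s) ≤ 2 ^ s * t ^ (-s) * (a ^ (-s) + b ^ (-s)) := by
  wlog hab : a ≤ b generalizing a b
  · linarith [this hb ha (by linarith) (le_of_not_ge hab)]
  have hb_le : b ^ (-s) ≤ 2 ^ s * t ^ (-s) := by
    calc b ^ (-s) = 2 ^ s * (2 * b) ^ (-s) := by
          rw [Real.mul_rpow zero_le_two hb.le, ← mul_assoc, ← Real.rpow_add two_pos,
            add_neg_cancel, Real.rpow_zero, one_mul]
      _ ≤ 2 ^ s * t ^ (-s) := by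
          have : t ≤ 2 * b := by linarith
          exact mul_le_mul_of_nonneg_left (Real.rpow_le_rpow_of_nonpos ht this (neg_nonpos.2 hs))
            (by positivity)
  have ha0 : 0 ≤ a ^ (-s) := Real.rpow_nonneg ha.le _
  have hb0 : 0 ≤ b ^ (-s) := Real.rpow_nonneg hb.le _
  nlinarith [mul_le_mul_of_nonneg_left hb_le ha0]

section Decay

variable {E F : Type*} [NormedAddCommGroup E] [NormedAddCommGroup F]

lemma exists_norm_le_mul_one_add_norm_rpow_neg [ProperSpace E] {f : E → F} (hf : Continuous f)
    {s C : ℝ} (hs : 0 ≤ s) (hdecay : ∀ x, ‖x‖ ^ s * ‖f x‖ ≤ C) :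
    ∃ D, ∀ x, ‖f x‖ ≤ D * (1 + ‖x‖) ^ (-s) := by
  obtain ⟨M, hM⟩ := (isCompact_closedBall (0 : E) 1).exists_bound_of_continuousOn hf.continuousOn
  refine ⟨2 ^ s * max C M, fun x => ?_⟩
  have hx : 0 < 1 + ‖x‖ := by positivity
  rw [Real.rpow_neg hx.le, ← div_eq_mul_inv, le_div_iff₀ (by positivity), mul_comm]
  rcases le_or_gt ‖x‖ 1 with hx1 | hx1
  · have hfx : ‖f x‖ ≤ M := hM x (mem_closedBall_zero_iff.2 hx1)
    calc (1 + ‖x‖) ^ s * ‖f x‖ ≤ 2 ^ s * M := by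
          gcongr; linarith
      _ ≤ 2 ^ s * max C M := by gcongr; exact le_max_right _ _
  · calc (1 + ‖x‖) ^ s * ‖f x‖ ≤ (2 * ‖x‖) ^ s * ‖f x‖ := by gcongr; linarith
      _ = 2 ^ s * (‖x‖ ^ s * ‖f x‖) := by
          rw [Real.mul_rpow zero_le_two (norm_nonneg _), mul_assoc]
      _ ≤ 2 ^ s * max C M := by gcongr; exact (hdecay x).trans (le_max_left _ _)

variable [NormedSpace ℝ E] [FiniteDimensional ℝ E] [MeasurableSpace E] [BorelSpace E]
  (μ : Measure E) [μ.IsAddHaarMeasure]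

lemma integral_norm_mul_norm_sub_le {f : E → F} {D s : ℝ} (hs : finrank ℝ E < s)
    (hf : ∀ x, ‖f x‖ ≤ D * (1 + ‖x‖) ^ (-s)) (y : E) :
    ∫ u, ‖f u‖ * ‖f (u - y)‖ ∂μ ≤
      2 ^ s * D ^ 2 * (2 * ∫ u, (1 + ‖u‖) ^ (-s) ∂μ) * (1 + ‖y‖) ^ (-s) := by
  have hs0 : 0 ≤ s := (Nat.cast_nonneg _).trans hs.le
  have hint : Integrable (fun u : E => (1 + ‖u‖) ^ (-s)) μ := integrable_one_add_norm hs
  have hint_sub : Integrable (fun u : E => (1 + ‖u - y‖) ^ (-s)) μ := hint.comp_sub_right y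
  have hbound : ∀ u, ‖f u‖ * ‖f (u - y)‖ ≤ 2 ^ s * D ^ 2 * (1 + ‖y‖) ^ (-s) *
      ((1 + ‖u‖) ^ (-s) + (1 + ‖u - y‖) ^ (-s)) := fun u => by
    have hy : ‖y‖ ≤ ‖u‖ + ‖u - y‖ := by simpa using norm_sub_le u (u - y)
    have hpeetre := Real.rpow_neg_mul_rpow_neg_le hs0 (a := 1 + ‖u‖) (b := 1 + ‖u - y‖)
      (t := 1 + ‖y‖) (by positivity) (by positivity) (by positivity) (by linarith)
    calc ‖f u‖ * ‖f (u - y)‖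
        ≤ (D * (1 + ‖u‖) ^ (-s)) * (D * (1 + ‖u - y‖) ^ (-s)) :=
          mul_le_mul (hf u) (hf (u - y)) (norm_nonneg _) ((norm_nonneg _).trans (hf u))
      _ = D ^ 2 * ((1 + ‖u‖) ^ (-s) * (1 + ‖u - y‖) ^ (-s)) := by ring
      _ ≤ D ^ 2 * (2 ^ s * (1 + ‖y‖) ^ (-s) * ((1 + ‖u‖) ^ (-s) + (1 + ‖u - y‖) ^ (-s))) := by
          gcongr
      _ = _ := by ring
  calc ∫ u, ‖f u‖ * ‖f (u - y)‖ ∂μ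
      ≤ ∫ u, 2 ^ s * D ^ 2 * (1 + ‖y‖) ^ (-s) * ((1 + ‖u‖) ^ (-s) + (1 + ‖u - y‖) ^ (-s)) ∂μ :=
        integral_mono_of_nonneg (.of_forall fun u => by positivity)
          ((hint.add hint_sub).const_mul _) (.of_forall hbound)
    _ = _ := by
        rw [integral_const_mul, integral_add hint hint_sub,
          integral_sub_right_eq_self (fun u => (1 + ‖u‖) ^ (-s)) y]
        ring

end Decay

section Packing

lemma summable_of_le_mul_setIntegral_ball {X ι : Type*} [PseudoMetricSpace X] [MeasurableSpace X]
    [OpensMeasurableSpace X] {μ : Measure X} {g : X → ℝ} (hg : Integrable g μ) (hg0 : 0 ≤ g)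
    {r c : ℝ} (hc : 0 ≤ c) (hgc : ∀ y, g y ≤ c * ∫ x in ball y r, g x ∂μ) {y : ι → X}
    (hsep : Pairwise fun i j => 2 * r ≤ dist (y i) (y j)) :
    Summable fun i => g (y i) := by
  refine summable_of_sum_le (c := c * ∫ x, g x ∂μ) (fun i => hg0 _) fun T => ?_
  have hdisj : (T : Set ι).Pairwise (Function.onFun Disjoint fun i => ball (y i) r) :=
    fun i _ j _ hij => ball_disjoint_ball (by linarith [hsep hij])
  calc ∑ i ∈ T, g (y i) ≤ ∑ i ∈ T, c * ∫ x in ball (y i) r, g x ∂μ :=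
        Finset.sum_le_sum fun i _ => hgc (y i)
    _ = c * ∫ x in ⋃ i ∈ T, ball (y i) r, g x ∂μ := by
        rw [← Finset.mul_sum, integral_biUnion_finset T (fun i _ => measurableSet_ball) hdisj
          fun i _ => hg.integrableOn]
    _ ≤ c * ∫ x, g x ∂μ :=
        mul_le_mul_of_nonneg_left (setIntegral_le_integral hg (.of_forall hg0)) hc

variable {E : Type*} [NormedAddCommGroup E] [NormedSpace ℝ E] [FiniteDimensional ℝ E]

lemma one_add_norm_rpow_neg_le_mul_setIntegral_ball [MeasurableSpace E] [BorelSpace E]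
    (μ : Measure E) [μ.IsAddHaarMeasure] {s r : ℝ} (hs : 0 ≤ s) (hr : 0 < r) (y : E) :
    (1 + ‖y‖) ^ (-s) ≤
      (1 + r) ^ s / μ.real (ball 0 r) * ∫ x in ball y r, (1 + ‖x‖) ^ (-s) ∂μ := by
  have hlow : ∀ x ∈ ball y r, (1 + r) ^ (-s) * (1 + ‖y‖) ^ (-s) ≤ (1 + ‖x‖) ^ (-s) := by
    intro x hx
    rw [← Real.mul_rpow (by linarith) (by positivity)]
    refine Real.rpow_le_rpow_of_nonpos (by positivity) ?_ (neg_nonpos.2 hs)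
    have : ‖x‖ ≤ ‖y‖ + r := by
      linarith [norm_le_norm_add_norm_sub' x y, (mem_ball_iff_norm.1 hx).le]
    nlinarith [norm_nonneg y]
  have hint : IntegrableOn (fun x : E => (1 + ‖x‖) ^ (-s)) (ball y r) μ :=
    (ContinuousOn.integrableOn_compact (isCompact_closedBall y r)
      ((continuous_const.add continuous_norm).rpow_const fun x =>
        Or.inl (add_pos_of_pos_of_nonneg one_pos (norm_nonneg x)).ne').continuousOn).mono_set
      ball_subset_closedBall
  have hmass := setIntegral_ge_of_const_le measurableSet_ball measure_ball_lt_top.ne hlow hint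
  rw [measureReal_def, Measure.addHaar_ball_center, ← measureReal_def, smul_eq_mul] at hmass
  have hV : 0 < μ.real (ball 0 r) :=
    ENNReal.toReal_pos (measure_ball_pos μ 0 hr).ne' measure_ball_lt_top.ne
  calc (1 + ‖y‖) ^ (-s)
      = (1 + r) ^ s / μ.real (ball 0 r) *
          (μ.real (ball 0 r) * ((1 + r) ^ (-s) * (1 + ‖y‖) ^ (-s))) := by
        rw [Real.rpow_neg (by linarith : (0:ℝ) ≤ 1 + r)]
        field_simp
    _ ≤ _ := mul_le_mul_of_nonneg_left hmass (div_nonneg (by positivity) hV.le)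

theorem summable_one_add_norm_rpow_neg_of_separated {ι : Type*} {s δ : ℝ}
    (hs : finrank ℝ E < s) (hδ : 0 < δ) {y : ι → E}
    (hsep : Pairwise fun i j => δ ≤ dist (y i) (y j)) :
    Summable fun i => (1 + ‖y i‖) ^ (-s) := by
  borelize E
  have hs0 : 0 ≤ s := (Nat.cast_nonneg _).trans hs.le
  exact summable_of_le_mul_setIntegral_ball (μ := Measure.addHaar) (integrable_one_add_norm hs)
    (fun x => by positivity) (div_nonneg (by positivity) measureReal_nonneg)
    (one_add_norm_rpow_neg_le_mul_setIntegral_ball _ hs0 (half_pos hδ))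
    fun i j hij => by linarith [hsep hij]

end Packing

section ModelSet

variable {E F : Type*} [NormedAddCommGroup E] [NormedAddCommGroup F] [ProperSpace E]
  [ProperSpace F] (L : Submodule ℤ (E × F)) [DiscreteTopology L]

lemma exists_pos_le_dist_snd_of_injOn_snd (hinj : Set.InjOn Prod.snd (L : Set (E × F)))
    {K : Set E} (hK : Bornology.IsBounded K) :
    ∃ δ > 0, ∀ p ∈ L, ∀ q ∈ L, p.1 ∈ K → q.1 ∈ K → p ≠ q → δ ≤ dist p.2 q.2 := by
  have hclosed : IsClosed (L : Set (E × F)) :=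
    have : DiscreteTopology L.toAddSubgroup := ‹DiscreteTopology L›
    AddSubgroup.isClosed_of_discrete (H := L.toAddSubgroup)
  set S := closedBall (0 : E × F) (max (diam K) 1) ∩ L
  have hS : S.Finite := finite_isBounded_inter_isClosed
    (isDiscrete_iff_discreteTopology.2 ‹_›) isBounded_closedBall hclosed
  have hpos : ∀ q ∈ S \ {0}, 0 < ‖q.2‖ := fun q hq =>
    norm_pos_iff.2 fun h => hq.2 (hinj hq.1.2 L.zero_mem h)
  have hev : ∀ᶠ δ in 𝓝[>] (0 : ℝ), δ ≤ 1 ∧ ∀ q ∈ S \ {0}, δ ≤ ‖q.2‖ :=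
    nhdsWithin_le_nhds ((eventually_le_nhds one_pos).and
      (hS.sdiff.eventually_all.2 fun q hq => eventually_le_nhds (hpos q hq)))
  obtain ⟨δ, ⟨hδ1, hδS⟩, hδ⟩ := (hev.and self_mem_nhdsWithin).exists
  refine ⟨δ, hδ, fun p hp q hq hpK hqK hpq => ?_⟩
  rw [dist_eq_norm, ← Prod.snd_sub]
  by_contra! hlt
  refine (hδS (p - q) ⟨⟨?_, sub_mem hp hq⟩, sub_ne_zero.2 hpq⟩).not_gt hlt
  rw [mem_closedBall_zero_iff, Prod.norm_def, Prod.fst_sub, ← dist_eq_norm]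
  exact max_le_max (dist_le_diam_of_mem hK hpK hqK) (by linarith)

lemma exists_pos_le_dist_star_of_injOn_snd (hinj : Set.InjOn Prod.snd (L : Set (E × F)))
    {star : E → F} (hstar : ∀ p ∈ L, star p.1 = p.2) {K : Set E} (hK : Bornology.IsBounded K) :
    ∃ δ > 0, Pairwise fun z w : ↥(Prod.fst '' (L : Set (E × F)) ∩ K) =>
      δ ≤ dist (star z) (star w) := by
  obtain ⟨δ, hδ, hsep⟩ := exists_pos_le_dist_snd_of_injOn_snd L hinj hK
  refine ⟨δ, hδ, fun z w hzw => ?_⟩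
  obtain ⟨⟨p, hp, hpz⟩, hzK⟩ := z.2
  obtain ⟨⟨q, hq, hqw⟩, hwK⟩ := w.2
  rw [← hpz, ← hqw, hstar p hp, hstar q hq]
  exact hsep p hp q hq (hpz ▸ hzK) (hqw ▸ hwK) fun h =>
    hzw (Subtype.ext (by rw [← hpz, ← hqw, h]))

end ModelSet

theorem absolute_autocorrelation_locally_finite_general (d m : ℕ)
    (L : Submodule ℤ (EuclideanSpace ℝ (Fin d) × EuclideanSpace ℝ (Fin m)))
    [DiscreteTopology L]
    (hinj2 : Set.InjOn Prod.snd (L : Set (EuclideanSpace ℝ (Fin d) × EuclideanSpace ℝ (Fin m))))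
    (star : EuclideanSpace ℝ (Fin d) → EuclideanSpace ℝ (Fin m))
    (hstar : ∀ p ∈ L, star (Prod.fst p) = Prod.snd p)
    (f : EuclideanSpace ℝ (Fin m) → ℂ) (hf : Continuous f)
    (C α : ℝ) (hα : 0 < α)
    (hdecay : ∀ x : EuclideanSpace ℝ (Fin m), ‖x‖ ^ ((m : ℝ) + 1 + α) * ‖f x‖ ≤ C)
    (K : Set (EuclideanSpace ℝ (Fin d))) (hK : IsCompact K) :
    Summable fun z : ((physL d m L ∩ K : Set (EuclideanSpace ℝ (Fin d)))) =>
      (ZLattice.covolume L volume)⁻¹ *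
        ∫ u, ‖f u‖ * ‖f (u - star (z : EuclideanSpace ℝ (Fin d)))‖ := by
  have hs : (finrank ℝ (EuclideanSpace ℝ (Fin m)) : ℝ) < m + 1 + α := by
    rw [finrank_euclideanSpace_fin]; linarith
  obtain ⟨D, hD⟩ := exists_norm_le_mul_one_add_norm_rpow_neg hf (by positivity) hdecay
  obtain ⟨δ, hδ, hsep⟩ := exists_pos_le_dist_star_of_injOn_snd L hinj2 hstar hK.isBounded
  have hweights := summable_one_add_norm_rpow_neg_of_separated hs hδ hsep
  exact (Summable.of_nonneg_of_le (fun z => integral_nonneg fun u => by positivity)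
    (fun z => integral_norm_mul_norm_sub_le volume hs hD _) (hweights.mul_left _)).mul_left _

/-- the measure γ_{|ω|} = ∑_{z∈L} |η|(z) δ_z, with
|η|(z) = (1/|det L̃|) ∫ |f(u)||f(u−z*)| du, is locally finite: for every compact K,
∑_{z ∈ L ∩ K} |η|(z) < ∞ (i.e. the family is summable). -/
theorem absolute_autocorrelation_locally_finite (d m : ℕ)
    (L : Submodule ℤ (EuclideanSpace ℝ (Fin d) × EuclideanSpace ℝ (Fin m)))
    [DiscreteTopology L] [IsZLattice ℝ L]
    (hinj1 : Set.InjOn Prod.fst (L : Set (EuclideanSpace ℝ (Fin d) × EuclideanSpace ℝ (Fin m))))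
    (hdense1 : Dense (physL d m L))
    (hinj2 : Set.InjOn Prod.snd (L : Set (EuclideanSpace ℝ (Fin d) × EuclideanSpace ℝ (Fin m))))
    (hdense2 : Dense (Prod.snd '' (L : Set (EuclideanSpace ℝ (Fin d) × EuclideanSpace ℝ (Fin m)))))
    (star : EuclideanSpace ℝ (Fin d) → EuclideanSpace ℝ (Fin m))
    (hstar : ∀ p ∈ L, star (Prod.fst p) = Prod.snd p)
    (f : EuclideanSpace ℝ (Fin m) → ℂ) (hf : Continuous f)
    (C α : ℝ) (hC : 0 < C) (hα : 0 < α)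
    (hdecay : ∀ x : EuclideanSpace ℝ (Fin m), ‖x‖ ^ ((m : ℝ) + 1 + α) * ‖f x‖ ≤ C)
    (K : Set (EuclideanSpace ℝ (Fin d))) (hK : IsCompact K) :
    Summable fun z : ((physL d m L ∩ K : Set (EuclideanSpace ℝ (Fin d)))) =>
      (ZLattice.covolume L volume)⁻¹ *
        ∫ u, ‖f u‖ * ‖f (u - star (z : EuclideanSpace ℝ (Fin d)))‖ :=
  absolute_autocorrelation_locally_finite_general d m L hinj2 star hstar f hf C α hα hdecay K hK
end

section
/- Duality of the cut-and-project scheme: let L̃ ⊂ ℝ^d × ℝ^m be a lattice such that π₁|_{L̃} is injective with dense image and π₂|_{L̃} is injective with dense image. Then the dual lattice (L̃)* = {y : y·x ∈ ℤ for all x ∈ L̃} has the same properties: π₁|_{(L̃)*} is injective with image L* dense in ℝ^d, and π₂|_{(L̃)*} is injective with dense image in ℝ^m. -/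
/-!
If `(0, v)` lies in the dual lattice, then `⟪v, ·⟫` is integer-valued on the dense set `π₂ L̃`,
which forces `v = 0`; this gives injectivity of `π₁` on `(L̃)*`, and symmetrically of `π₂`.
If `π₁ (L̃)*` were not dense, Kronecker's theorem (a non-dense subgroup `H` of a Euclidean space
has a nonzero `u` with `⟪u, H⟫ ⊆ ℤ`) would put `(u, 0)` into `(L̃)** = L̃`, contradicting the
injectivity of `π₂` on `L̃`.

Kronecker's theorem: the closure of `H` is `V ⊕ D`, where `V` is the largest subspace it
contains and `D` is a subgroup of `Vᗮ`. A closed subgroup that is not discrete contains a line,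
so `D` is discrete. A discrete proper subgroup either spans a proper subspace, and `u` can be
taken orthogonal to it, or is a lattice, and `u` can be taken from its dual basis.
-/

open scoped RealInnerProductSpace

/-- The dual lattice of L̃ in ℝ^d × ℝ^m, w.r.t. the Euclidean pairing of the product. -/
def dualL (d m : ℕ) (L : Submodule ℤ (EuclideanSpace ℝ (Fin d) × EuclideanSpace ℝ (Fin m))) :
    Set (EuclideanSpace ℝ (Fin d) × EuclideanSpace ℝ (Fin m)) :=
  {y | ∀ x ∈ L, ∃ n : ℤ, ⟪y.1, x.1⟫ + ⟪y.2, x.2⟫ = (n : ℝ)}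

open Filter Topology Set

theorem tendsto_floor_div_mul_self {ι : Type*} {l : Filter ι} {r : ι → ℝ}
    (hr : Tendsto r l (𝓝 0)) (hr0 : ∀ k, r k ≠ 0) (t : ℝ) :
    Tendsto (fun k => (⌊t / r k⌋ : ℝ) * r k) l (𝓝 t) := by
  have hfract : Tendsto (fun k => Int.fract (t / r k) * r k) l (𝓝 0) :=
    isBoundedUnder_le_mul_tendsto_zero
      (isBoundedUnder_of ⟨1, fun k => by simp [abs_of_nonneg, (Int.fract_lt_one _).le]⟩) hr
  refine (by simpa using tendsto_const_nhds.sub hfract : Tendsto _ l (𝓝 t)).congr fun k => ?_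
  rw [Int.fract, sub_mul, div_mul_cancel₀ t (hr0 k), sub_sub_cancel]

namespace Submodule

def linealitySpace {E : Type*} [AddCommGroup E] [Module ℝ E] (G : Submodule ℤ E) :
    Submodule ℝ E where
  carrier := {v | ∀ t : ℝ, t • v ∈ G}
  add_mem' hv hw t := by simpa [smul_add] using G.add_mem (hv t) (hw t)
  zero_mem' t := by simp
  smul_mem' c v hv t := by simpa [smul_smul] using hv (t * c)

theorem mem_linealitySpace {E : Type*} [AddCommGroup E] [Module ℝ E] {G : Submodule ℤ E}
    {v : E} : v ∈ G.linealitySpace ↔ ∀ t : ℝ, t • v ∈ G :=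
  Iff.rfl

theorem linealitySpace_ne_bot_of_not_discreteTopology {E : Type*} [NormedAddCommGroup E]
    [NormedSpace ℝ E] [FiniteDimensional ℝ E] {G : Submodule ℤ E} (hG : IsClosed (G : Set E))
    (hdisc : ¬DiscreteTopology G) : G.linealitySpace ≠ ⊥ := by
  simp_rw [discreteTopology_iff_isOpen_singleton_zero, Metric.isOpen_singleton_iff] at hdisc
  push Not at hdisc
  choose g hg hg0 using fun k : ℕ => hdisc (1 / (k + 1)) Nat.one_div_pos_of_nat
  have hg_lim : Tendsto (fun k => ‖(g k : E)‖) atTop (𝓝 0) :=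
    squeeze_zero (fun _ => norm_nonneg _) (fun k => by simpa using (hg k).le)
      tendsto_one_div_add_atTop_nhds_zero_nat
  have hg_ne : ∀ k, ‖(g k : E)‖ ≠ 0 := fun k => by simpa using hg0 k
  have hdir : ∀ k, ‖(g k : E)‖⁻¹ • (g k : E) ∈ Metric.sphere (0 : E) 1 := fun k => by
    simp [norm_smul, hg_ne k]
  obtain ⟨v, hv, φ, hφ, hv_lim⟩ := (isCompact_sphere (0 : E) 1).tendsto_subseq hdir
  refine (Submodule.ne_bot_iff _).mpr ⟨v, fun t => ?_, ne_zero_of_mem_unit_sphere ⟨v, hv⟩⟩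
  -- `t • v` is the limit of `⌊t / ‖g k‖⌋ • g k = (⌊t / ‖g k‖⌋ * ‖g k‖) • (‖g k‖⁻¹ • g k)`
  refine hG.mem_of_tendsto (b := atTop) (f := fun k => ⌊t / ‖(g (φ k) : E)‖⌋ • (g (φ k) : E))
    ?_ (.of_forall fun k => G.smul_mem _ (g (φ k)).2)
  refine ((tendsto_floor_div_mul_self (hg_lim.comp hφ.tendsto_atTop) (fun k => hg_ne _) t).smul
    hv_lim).congr fun k => ?_
  simp [smul_smul, hg_ne, Int.cast_smul_eq_zsmul]

variable {E : Type*} [NormedAddCommGroup E] [InnerProductSpace ℝ E] [FiniteDimensional ℝ E]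

theorem exists_ne_zero_forall_inner_int_of_discreteTopology (L : Submodule ℤ E)
    [DiscreteTopology L] (hL : L ≠ ⊤) : ∃ u ≠ 0, ∀ x ∈ L, ∃ n : ℤ, ⟪u, x⟫ = n := by
  by_cases hspan : span ℝ (L : Set E) = ⊤
  · have : IsZLattice ℝ L := ⟨hspan⟩
    have : Nontrivial E := by
      obtain ⟨x, -, hx⟩ := SetLike.exists_of_lt hL.lt_top
      exact nontrivial_of_ne x 0 (ne_of_mem_of_not_mem L.zero_mem hx).symm
    let b := Module.Free.chooseBasis ℤ L
    obtain ⟨i⟩ := (b.ofZLatticeBasis ℝ L).index_nonempty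
    let u := (InnerProductSpace.toDual ℝ E).symm
      ((b.ofZLatticeBasis ℝ L).coord i).toContinuousLinearMap
    have hu : ∀ x, ⟪u, x⟫ = (b.ofZLatticeBasis ℝ L).coord i x :=
      fun _ => InnerProductSpace.toDual_symm_apply
    refine ⟨u, fun hu0 => ?_, fun x hx => ⟨b.repr ⟨x, hx⟩ i, ?_⟩⟩
    · simpa [hu0] using hu (b.ofZLatticeBasis ℝ L i)
    · rw [hu, Module.Basis.coord_apply]
      exact b.ofZLatticeBasis_repr_apply ℝ L ⟨x, hx⟩ i
  · obtain ⟨u, hu, hu0⟩ := exists_mem_ne_zero_of_ne_bot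
      (mt orthogonal_eq_bot_iff.mp hspan : (span ℝ (L : Set E))ᗮ ≠ ⊥)
    exact ⟨u, hu0, fun x hx => ⟨0, by
      simpa using inner_left_of_mem_orthogonal (subset_span hx) hu⟩⟩

theorem exists_ne_zero_forall_inner_int_of_not_dense (H : Submodule ℤ E)
    (hH : ¬Dense (H : Set E)) : ∃ u ≠ 0, ∀ x ∈ H, ∃ n : ℤ, ⟪u, x⟫ = n := by
  set G := H.topologicalClosure
  set V := G.linealitySpace
  have hV : ∀ v ∈ V, v ∈ G := fun v hv => by simpa using mem_linealitySpace.mp hv 1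
  have hproj : ∀ x ∈ G, x - V.starProjection x ∈ G := fun x hx =>
    G.sub_mem hx (hV _ (V.starProjection_apply_mem x))
  let D : Submodule ℤ Vᗮ := G.comap (Vᗮ.subtype.restrictScalars ℤ)
  have hD : D ≠ ⊤ := by
    refine fun hD => hH ?_
    rw [dense_iff_closure_eq, ← H.topologicalClosure_coe, eq_univ_iff_forall]
    intro x
    have hx : (⟨_, V.sub_starProjection_mem_orthogonal x⟩ : Vᗮ) ∈ D := hD ▸ mem_top
    exact (by simpa using G.add_mem (hV _ (V.starProjection_apply_mem x)) hx : x ∈ G)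
  have : DiscreteTopology D := by
    by_contra hdisc
    obtain ⟨w, hw, hw0⟩ := exists_mem_ne_zero_of_ne_bot <|
      linealitySpace_ne_bot_of_not_discreteTopology
        (H.isClosed_topologicalClosure.preimage continuous_subtype_val) hdisc
    have hwV : (w : E) ∈ V := fun t => mem_linealitySpace.mp hw t
    exact hw0 (Subtype.ext (V.inf_orthogonal_eq_bot.le ⟨hwV, w.2⟩))
  obtain ⟨u, hu0, hu⟩ := D.exists_ne_zero_forall_inner_int_of_discreteTopology hD
  refine ⟨u, by simpa using hu0, fun x hx => ?_⟩
  obtain ⟨n, hn⟩ := hu ⟨x - V.starProjection x, V.sub_starProjection_mem_orthogonal x⟩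
    (hproj x (H.le_topologicalClosure hx))
  rw [coe_inner, inner_sub_right,
    inner_left_of_mem_orthogonal (V.starProjection_apply_mem x) u.2, sub_zero] at hn
  exact ⟨n, hn⟩

end Submodule

theorem eq_zero_of_forall_inner_int_of_dense {E : Type*} [NormedAddCommGroup E]
    [InnerProductSpace ℝ E] {S : Set E} (hS : Dense S) {v : E}
    (hv : ∀ w ∈ S, ∃ n : ℤ, ⟪v, w⟫ = n) : v = 0 := by
  by_contra hv0
  have hvv : 0 < ⟪v, v⟫ := real_inner_self_pos.mpr hv0
  -- `⟪v, ·⟫` takes the value `1 / 2` at `(2 ⟪v, v⟫)⁻¹ • v`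
  obtain ⟨w, hw, hwS⟩ := hS.inter_open_nonempty ((fun w => ⟪v, w⟫) ⁻¹' Ioo 0 1)
    (isOpen_Ioo.preimage (continuous_const.inner continuous_id))
    ⟨(2 * ⟪v, v⟫)⁻¹ • v, by simp [real_inner_smul_right, field]⟩
  obtain ⟨n, hn⟩ := hv w hwS
  obtain ⟨h0, h1⟩ : (0 : ℝ) < n ∧ (n : ℝ) < 1 := hn ▸ hw
  norm_cast at h0 h1
  omega

theorem LinearMap.BilinForm.dualSubmodule_dualSubmodule_of_isZLattice {E : Type*}
    [NormedAddCommGroup E] [NormedSpace ℝ E] [FiniteDimensional ℝ E]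
    {B : LinearMap.BilinForm ℝ E} (hB : B.Nondegenerate) (hB' : B.IsSymm) (L : Submodule ℤ E)
    [DiscreteTopology L] [IsZLattice ℝ L] : B.dualSubmodule (B.dualSubmodule L) = L := by
  rw [← (Module.Free.chooseBasis ℤ L).ofZLatticeBasis_span ℝ]
  exact B.dualSubmodule_dualSubmodule_of_basis hB hB' _

section ProdInner

variable (E F : Type*) [NormedAddCommGroup E] [InnerProductSpace ℝ E] [NormedAddCommGroup F]
  [InnerProductSpace ℝ F]

noncomputable def prodInner : LinearMap.BilinForm ℝ (E × F) :=
  (innerₗ E).compl₁₂ (.fst ℝ E F) (.fst ℝ E F) + (innerₗ F).compl₁₂ (.snd ℝ E F) (.snd ℝ E F)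

variable {E F}

@[simp]
theorem prodInner_apply (x y : E × F) : prodInner E F x y = ⟪x.1, y.1⟫ + ⟪x.2, y.2⟫ := rfl

theorem prodInner_isSymm : (prodInner E F).IsSymm :=
  ⟨fun x y => by simp [real_inner_comm]⟩

theorem prodInner_nondegenerate : (prodInner E F).Nondegenerate := by
  refine (LinearMap.BilinForm.isSymm_iff.mp prodInner_isSymm).isRefl
    |>.nondegenerate_iff_separatingLeft.mpr fun x hx => ?_
  have h := hx x
  rw [prodInner_apply, real_inner_self_eq_norm_sq, real_inner_self_eq_norm_sq,
    add_eq_zero_iff_of_nonneg (by positivity) (by positivity)] at h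
  exact Prod.ext (by simpa using h.1) (by simpa using h.2)

variable {L : Submodule ℤ (E × F)}

theorem mem_dualSubmodule_prodInner {y : E × F} :
    y ∈ (prodInner E F).dualSubmodule L ↔ ∀ x ∈ L, ∃ n : ℤ, ⟪y.1, x.1⟫ + ⟪y.2, x.2⟫ = n := by
  simp [LinearMap.BilinForm.mem_dualSubmodule, Submodule.mem_one, eq_comm]

theorem injOn_fst_dualSubmodule_prodInner (hL : Dense (Prod.snd '' (L : Set (E × F)))) :
    InjOn Prod.fst ((prodInner E F).dualSubmodule L : Set (E × F)) := by
  intro y hy y' hy' h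
  have hz := mem_dualSubmodule_prodInner.mp (sub_mem hy hy')
  have h2 : (y - y').2 = 0 := eq_zero_of_forall_inner_int_of_dense hL <| by
    rintro _ ⟨x, hx, rfl⟩
    simpa [h] using hz x hx
  exact sub_eq_zero.mp (Prod.ext (by simp [h]) h2)

theorem injOn_snd_dualSubmodule_prodInner (hL : Dense (Prod.fst '' (L : Set (E × F)))) :
    InjOn Prod.snd ((prodInner E F).dualSubmodule L : Set (E × F)) := by
  intro y hy y' hy' h
  have hz := mem_dualSubmodule_prodInner.mp (sub_mem hy hy')
  have h1 : (y - y').1 = 0 := eq_zero_of_forall_inner_int_of_dense hL <| by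
    rintro _ ⟨x, hx, rfl⟩
    simpa [h] using hz x hx
  exact sub_eq_zero.mp (Prod.ext h1 (by simp [h]))

theorem dense_fst_dualSubmodule_prodInner [FiniteDimensional ℝ E]
    (hLL : (prodInner E F).dualSubmodule ((prodInner E F).dualSubmodule L) = L)
    (hL : InjOn Prod.snd (L : Set (E × F))) :
    Dense (Prod.fst '' ((prodInner E F).dualSubmodule L : Set (E × F))) := by
  by_contra hnd
  obtain ⟨u, hu0, hu⟩ := Submodule.exists_ne_zero_forall_inner_int_of_not_dense
    (((prodInner E F).dualSubmodule L).map (LinearMap.fst ℤ E F)) (by simpa using hnd)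
  have hmem : ((u, 0) : E × F) ∈ L := hLL ▸ mem_dualSubmodule_prodInner.mpr fun y hy => by
    simpa using hu y.1 ⟨y, hy, rfl⟩
  exact hu0 (congrArg Prod.fst (hL hmem L.zero_mem rfl))

theorem dense_snd_dualSubmodule_prodInner [FiniteDimensional ℝ F]
    (hLL : (prodInner E F).dualSubmodule ((prodInner E F).dualSubmodule L) = L)
    (hL : InjOn Prod.fst (L : Set (E × F))) :
    Dense (Prod.snd '' ((prodInner E F).dualSubmodule L : Set (E × F))) := by
  by_contra hnd
  obtain ⟨u, hu0, hu⟩ := Submodule.exists_ne_zero_forall_inner_int_of_not_dense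
    (((prodInner E F).dualSubmodule L).map (LinearMap.snd ℤ E F)) (by simpa using hnd)
  have hmem : ((0, u) : E × F) ∈ L := hLL ▸ mem_dualSubmodule_prodInner.mpr fun y hy => by
    simpa using hu y.2 ⟨y, hy, rfl⟩
  exact hu0 (congrArg Prod.snd (hL hmem L.zero_mem rfl))

end ProdInner

theorem dualL_eq (d m : ℕ)
    (L : Submodule ℤ (EuclideanSpace ℝ (Fin d) × EuclideanSpace ℝ (Fin m))) :
    dualL d m L =
      (prodInner (EuclideanSpace ℝ (Fin d)) (EuclideanSpace ℝ (Fin m))).dualSubmodule L :=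
  Set.ext fun _ => mem_dualSubmodule_prodInner.symm

/-- Duality of the cut-and-project scheme: if both projections are
injective on the lattice L̃ with dense images, then the same holds for the dual
lattice (L̃)*. -/
theorem cut_and_project_duality (d m : ℕ)
    (L : Submodule ℤ (EuclideanSpace ℝ (Fin d) × EuclideanSpace ℝ (Fin m)))
    [DiscreteTopology L] [IsZLattice ℝ L]
    (hinj1 : Set.InjOn Prod.fst (L : Set (EuclideanSpace ℝ (Fin d) × EuclideanSpace ℝ (Fin m))))
    (hdense1 : Dense (Prod.fst '' (L : Set (EuclideanSpace ℝ (Fin d) × EuclideanSpace ℝ (Fin m)))))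
    (hinj2 : Set.InjOn Prod.snd (L : Set (EuclideanSpace ℝ (Fin d) × EuclideanSpace ℝ (Fin m))))
    (hdense2 : Dense (Prod.snd '' (L : Set (EuclideanSpace ℝ (Fin d) × EuclideanSpace ℝ (Fin m))))) :
    Set.InjOn Prod.fst (dualL d m L) ∧
    Dense (Prod.fst '' dualL d m L) ∧
    Set.InjOn Prod.snd (dualL d m L) ∧
    Dense (Prod.snd '' dualL d m L) := by
  have hLL := LinearMap.BilinForm.dualSubmodule_dualSubmodule_of_isZLattice
    prodInner_nondegenerate prodInner_isSymm L
  rw [dualL_eq]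
  exact ⟨injOn_fst_dualSubmodule_prodInner hdense2, dense_fst_dualSubmodule_prodInner hLL hinj2,
    injOn_snd_dualSubmodule_prodInner hdense1, dense_snd_dualSubmodule_prodInner hLL hinj1⟩
end
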